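/- If t₁ ≡_A t₂, then for any readonly call r and any sequential call s, r occurs before s in t₁ if and only if the corresponding occurrences satisfy r before s in t₂. Formally: the induced permutation from t₁ to t₂ preserves the relative order of every (readonly, sequential) pair and every (sequential, readonly) pair of occurrences. -/

import Mathlib

/-- Annotation classes for external calls. -/
inductive Ann where
  | sequential | readonly | unordered
deriving DecidableEq

/-- An external call: an identifier together with its annotation class. -/
structure Call where
  name : ℕ
  ann : Ann
deriving DecidableEq

/-- A swap of adjacent calls `a`, `b` is allowed iff neither is sequential
and not both are readonly. -/
def allowedSwap (a b : Call) : Prop :=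
  a.ann ≠ Ann.sequential ∧ b.ann ≠ Ann.sequential ∧
    ¬(a.ann = Ann.readonly ∧ b.ann = Ann.readonly)

/-- One allowed adjacent swap in a trace. -/
inductive SwapStep : List Call → List Call → Prop
  | swap (pre post : List Call) (a b : Call) (h : allowedSwap a b) :
      SwapStep (pre ++ a :: b :: post) (pre ++ b :: a :: post)

/-- `TraceEquiv t₁ t₂` (`t₁ ≡_A t₂`): `t₂` is obtained from `t₁` by a finite
sequence of allowed adjacent swaps. -/
def TraceEquiv : List Call → List Call → Prop :=
  Relation.ReflTransGen SwapStep

/-!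
An allowed swap exchanges two adjacent calls neither of which is sequential, so the
transposition of their two positions keeps the relative order of every pair of positions
holding a sequential call. Composing these transpositions along the chain of swaps yields
the required matching of occurrences.
-/

variable {α : Type*}

def IsOrderMatching (r : α → α → Prop) (t₁ t₂ : List α) (σ : Fin t₁.length ≃ Fin t₂.length) :
    Prop :=
  (∀ i, t₂.get (σ i) = t₁.get i) ∧ ∀ i j, r (t₁.get i) (t₁.get j) → (i < j ↔ σ i < σ j)

namespace IsOrderMatching

variable {r : α → α → Prop}

theorem refl (t : List α) : IsOrderMatching r t t (Equiv.refl _) :=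
  ⟨fun _ => rfl, fun _ _ _ => Iff.rfl⟩

theorem trans {t₁ t₂ t₃ : List α} {σ : Fin t₁.length ≃ Fin t₂.length}
    {τ : Fin t₂.length ≃ Fin t₃.length} (hσ : IsOrderMatching r t₁ t₂ σ)
    (hτ : IsOrderMatching r t₂ t₃ τ) : IsOrderMatching r t₁ t₃ (σ.trans τ) := by
  refine ⟨fun i => (hτ.1 (σ i)).trans (hσ.1 i), fun i j hij => ?_⟩
  rw [hσ.2 i j hij]
  exact hτ.2 (σ i) (σ j) (by rwa [hσ.1, hσ.1])

end IsOrderMatching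

theorem Nat.lt_iff_swap_succ_lt_swap_succ {n i j : ℕ} (h : ¬(i = n ∧ j = n + 1))
    (h' : ¬(i = n + 1 ∧ j = n)) :
    i < j ↔ Equiv.swap n (n + 1) i < Equiv.swap n (n + 1) j := by
  simp only [Equiv.swap_apply_def]
  split_ifs <;> omega

theorem List.getElem_swap_succ_append_cons_cons (pre post : List α) (a b : α) (k : ℕ)
    (hk : k < (pre ++ a :: b :: post).length)
    (hk' : Equiv.swap pre.length (pre.length + 1) k < (pre ++ b :: a :: post).length) :
    (pre ++ b :: a :: post)[Equiv.swap pre.length (pre.length + 1) k] =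
      (pre ++ a :: b :: post)[k] := by
  simp only [Equiv.swap_apply_def, List.getElem_append, List.getElem_cons]
  split_ifs <;> first | rfl | omega

theorem exists_isOrderMatching_append_cons_cons {r : α → α → Prop} (pre post : List α) (a b : α)
    (hab : ¬r a b) (hba : ¬r b a) :
    ∃ σ, IsOrderMatching r (pre ++ a :: b :: post) (pre ++ b :: a :: post) σ := by
  set n := pre.length
  have hlen : (pre ++ a :: b :: post).length = (pre ++ b :: a :: post).length := by simp
  let p : Fin (pre ++ a :: b :: post).length := ⟨n, by simp [n]⟩
  let q : Fin (pre ++ a :: b :: post).length := ⟨n + 1, by simp [n]⟩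
  have hval (k) : ((Equiv.swap p q k : Fin _) : ℕ) = Equiv.swap n (n + 1) k :=
    (Fin.val_injective.swap_apply p q k).symm
  refine ⟨(Equiv.swap p q).trans (finCongr hlen), fun i => ?_, fun i j hij => ?_⟩
  · simp only [Equiv.trans_apply, List.get_eq_getElem, finCongr_apply, Fin.val_cast, hval]
    exact List.getElem_swap_succ_append_cons_cons pre post a b i _ _
  · simp only [Equiv.trans_apply, Fin.lt_def, finCongr_apply, Fin.val_cast, hval]
    exact Nat.lt_iff_swap_succ_lt_swap_succ
      (fun ⟨hi, hj⟩ => hab (by simpa [hi, hj, n] using hij))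
      (fun ⟨hi, hj⟩ => hba (by simpa [hi, hj, n] using hij))

theorem exists_isOrderMatching_of_reflTransGen {r : α → α → Prop} {step : List α → List α → Prop}
    (hstep : ∀ {t₁ t₂}, step t₁ t₂ → ∃ σ, IsOrderMatching r t₁ t₂ σ) {t₁ t₂ : List α}
    (h : Relation.ReflTransGen step t₁ t₂) : ∃ σ, IsOrderMatching r t₁ t₂ σ := by
  induction h with
  | refl => exact ⟨_, .refl t₁⟩
  | tail _ h ih =>
    obtain ⟨σ, hσ⟩ := ih
    obtain ⟨τ, hτ⟩ := hstep h
    exact ⟨_, hσ.trans hτ⟩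

def ReadonlySequentialPair (a b : Call) : Prop :=
  (a.ann = Ann.readonly ∧ b.ann = Ann.sequential) ∨ (a.ann = Ann.sequential ∧ b.ann = Ann.readonly)

theorem allowedSwap.symm {a b : Call} (h : allowedSwap a b) : allowedSwap b a :=
  ⟨h.2.1, h.1, fun hba => h.2.2 hba.symm⟩

theorem not_readonlySequentialPair_of_allowedSwap {a b : Call} (h : allowedSwap a b) :
    ¬ReadonlySequentialPair a b := by
  rintro (⟨-, hb⟩ | ⟨ha, -⟩)
  exacts [h.2.1 hb, h.1 ha]

theorem SwapStep.exists_isOrderMatching {t₁ t₂ : List Call} (h : SwapStep t₁ t₂) :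
    ∃ σ, IsOrderMatching ReadonlySequentialPair t₁ t₂ σ := by
  obtain ⟨pre, post, a, b, hab⟩ := h
  exact exists_isOrderMatching_append_cons_cons pre post a b
    (not_readonlySequentialPair_of_allowedSwap hab)
    (not_readonlySequentialPair_of_allowedSwap hab.symm)

/-- if `t₁ ≡_A t₂`, the induced permutation of occurrences
(matching equal calls) preserves the relative order of every
(readonly, sequential) and (sequential, readonly) pair of occurrences. -/
theorem traceEquiv_preserves_readonly_sequential_order (t₁ t₂ : List Call)
    (h : TraceEquiv t₁ t₂) :
    ∃ σ : Fin t₁.length ≃ Fin t₂.length,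
      (∀ i : Fin t₁.length, t₂.get (σ i) = t₁.get i) ∧
      (∀ i j : Fin t₁.length,
        (((t₁.get i).ann = Ann.readonly ∧ (t₁.get j).ann = Ann.sequential) ∨
         ((t₁.get i).ann = Ann.sequential ∧ (t₁.get j).ann = Ann.readonly)) →
        (i < j ↔ σ i < σ j)) :=
  exists_isOrderMatching_of_reflTransGen SwapStep.exists_isOrderMatching h
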